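/- arXiv:2410.14581 — 4 statements merged into one kernel-verified Lean document; each statement's English description precedes it below -/
import Mathlib

section
/- Let p ≥ 2 and let x, y ∈ [-1,1]. Then (1/p)|x|^p + ((p-1)/p)|y|^p − |x||y|^{p-1} sign(xy) ≥ (1/(p·2^p)) |x − y|^p. -/
/-!
With `a = |x|` and `b = |y|`, the right-hand side is the Bregman divergence
`D(a, b) = a^p/p - b^p/p - b^(p-1) (a - b)` of `t ↦ t^p/p` plus `a b^(p-1) (1 - sign(xy)) ≥ 0`.

If `xy ≥ 0` then `|x - y| = |a - b|`. Splitting `D(a, b)` at the midpoint `m` of `a` and `b`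
leaves two divergences, nonnegative by Young's inequality, and `(m^(p-1) - b^(p-1)) (m - b)`,
which the superadditivity of `t ↦ t^(p-1)` bounds below by `|m - b|^p = |a - b|^p / 2^p`.

If `xy < 0` then `|x - y| = a + b`, the right-hand side is at least `(a^p + b^p) / p`, and
convexity of `t ↦ t^p` gives `((a + b) / 2)^p ≤ (a^p + b^p) / 2`.
-/

open Real

namespace Real

theorem sign_le_one (r : ℝ) : sign r ≤ 1 := by
  rcases sign_apply_eq r with h | h | h <;> rw [h] <;> norm_num

theorem rpow_sub_one_mul_self {x p : ℝ} (hx : 0 ≤ x) (hp : p ≠ 0) :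
    x ^ (p - 1) * x = x ^ p := by
  rw [← rpow_add_one' hx (by rwa [sub_add_cancel]), sub_add_cancel]

theorem add_div_two_rpow_le {a b p : ℝ} (ha : 0 ≤ a) (hb : 0 ≤ b) (hp : 1 ≤ p) :
    ((a + b) / 2) ^ p ≤ (a ^ p + b ^ p) / 2 := by
  have h := (convexOn_rpow hp).2 (Set.mem_Ici.2 ha) (Set.mem_Ici.2 hb)
    (by norm_num : (0 : ℝ) ≤ 1 / 2) (by norm_num : (0 : ℝ) ≤ 1 / 2) (by norm_num)
  simp only [smul_eq_mul] at h
  calc ((a + b) / 2) ^ p = (1 / 2 * a + 1 / 2 * b) ^ p := by ring_nf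
    _ ≤ 1 / 2 * a ^ p + 1 / 2 * b ^ p := h
    _ = (a ^ p + b ^ p) / 2 := by ring

theorem abs_sub_rpow_mul_abs_sub_le {u v q : ℝ} (hu : 0 ≤ u) (hv : 0 ≤ v) (hq : 1 ≤ q) :
    |u - v| ^ q * |u - v| ≤ (u ^ q - v ^ q) * (u - v) := by
  wlog hvu : v ≤ u generalizing u v
  · calc |u - v| ^ q * |u - v| = |v - u| ^ q * |v - u| := by rw [abs_sub_comm]
      _ ≤ (v ^ q - u ^ q) * (v - u) := this hv hu (le_of_not_ge hvu)
      _ = (u ^ q - v ^ q) * (u - v) := by ring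
  have hsuper : v ^ q + (u - v) ^ q ≤ u ^ q := by
    simpa using add_rpow_le_rpow_add hv (sub_nonneg.2 hvu) hq
  rw [abs_of_nonneg (sub_nonneg.2 hvu)]
  exact mul_le_mul_of_nonneg_right (by linarith) (sub_nonneg.2 hvu)

end Real

theorem abs_sub_eq_abs_add_abs_of_mul_nonpos {x y : ℝ} (h : x * y ≤ 0) : |x - y| = |x| + |y| := by
  rcases mul_nonpos_iff.1 h with ⟨hx, hy⟩ | ⟨hx, hy⟩
  · rw [abs_of_nonneg hx, abs_of_nonpos hy, abs_of_nonneg (by linarith)]; ring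
  · rw [abs_of_nonpos hx, abs_of_nonneg hy, abs_of_nonpos (by linarith)]; ring

theorem abs_sub_eq_abs_abs_sub_abs_of_mul_nonneg {x y : ℝ} (h : 0 ≤ x * y) :
    |x - y| = |(|x| - |y|)| := by
  rcases mul_nonneg_iff.1 h with ⟨hx, hy⟩ | ⟨hx, hy⟩
  · rw [abs_of_nonneg hx, abs_of_nonneg hy]
  · rw [abs_of_nonpos hx, abs_of_nonpos hy, ← abs_neg]; ring_nf

noncomputable def rpowBregman (p a b : ℝ) : ℝ :=
  a ^ p / p - b ^ p / p - b ^ (p - 1) * (a - b)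

section rpowBregman

variable {p a b : ℝ}

theorem rpowBregman_eq (hp : p ≠ 0) (hb : 0 ≤ b) :
    rpowBregman p a b = a ^ p / p + (p - 1) / p * b ^ p - a * b ^ (p - 1) := by
  rw [rpowBregman, ← rpow_sub_one_mul_self hb hp]
  field_simp
  ring

theorem rpowBregman_nonneg (hp : 1 < p) (ha : 0 ≤ a) (hb : 0 ≤ b) : 0 ≤ rpowBregman p a b := by
  have hyoung := young_inequality_of_nonneg ha (rpow_nonneg hb (p - 1))
    (HolderConjugate.conjExponent hp)
  rw [← rpow_mul hb, conjExponent, mul_div_cancel₀ _ (sub_ne_zero.2 hp.ne'),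
    div_div_eq_mul_div] at hyoung
  rw [rpowBregman_eq (by positivity) hb]
  linarith [show b ^ p * (p - 1) / p = (p - 1) / p * b ^ p by ring]

theorem rpowBregman_eq_add_add (p a b m : ℝ) :
    rpowBregman p a b =
      rpowBregman p a m + rpowBregman p m b + (m ^ (p - 1) - b ^ (p - 1)) * (a - m) := by
  unfold rpowBregman
  ring

theorem abs_sub_rpow_div_two_rpow_le_rpowBregman (hp : 2 ≤ p) (ha : 0 ≤ a) (hb : 0 ≤ b) :
    |a - b| ^ p / 2 ^ p ≤ rpowBregman p a b := by
  set m := (a + b) / 2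
  have hm : 0 ≤ m := by positivity
  have hmb : |m - b| = |a - b| / 2 := by
    rw [show m - b = (a - b) / 2 by ring, abs_div, abs_two]
  calc |a - b| ^ p / 2 ^ p = |m - b| ^ (p - 1) * |m - b| := by
        rw [rpow_sub_one_mul_self (abs_nonneg _) (by positivity), hmb,
          div_rpow (abs_nonneg _) zero_le_two]
    _ ≤ (m ^ (p - 1) - b ^ (p - 1)) * (m - b) :=
        abs_sub_rpow_mul_abs_sub_le hm hb (by linarith : (1 : ℝ) ≤ p - 1)
    _ = (m ^ (p - 1) - b ^ (p - 1)) * (a - m) := by congr 1; ring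
    _ ≤ rpowBregman p a b := by
      rw [rpowBregman_eq_add_add p a b m]
      have hp1 : 1 < p := by linarith
      linarith [rpowBregman_nonneg hp1 ha hm, rpowBregman_nonneg hp1 hm hb]

theorem add_rpow_div_two_rpow_div_le (hp : 2 ≤ p) (ha : 0 ≤ a) (hb : 0 ≤ b) :
    (a + b) ^ p / 2 ^ p / p ≤ a ^ p / p + (p - 1) / p * b ^ p := by
  have hp0 : 0 < p := by linarith
  rw [← div_rpow (by positivity) zero_le_two]
  calc ((a + b) / 2) ^ p / p ≤ (a ^ p + b ^ p) / 2 / p :=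
        div_le_div_of_nonneg_right (add_div_two_rpow_le ha hb (by linarith)) hp0.le
    _ ≤ (a ^ p + (p - 1) * b ^ p) / p := by
        gcongr
        nlinarith [rpow_nonneg ha p, rpow_nonneg hb p]
    _ = a ^ p / p + (p - 1) / p * b ^ p := by ring

end rpowBregman

theorem scalar_bregman_lower_bound_ge_two_general (p x y : ℝ) (hp : 2 ≤ p) :
    (1 / (p * (2 : ℝ) ^ p)) * |x - y| ^ p ≤
      (1 / p) * |x| ^ p + ((p - 1) / p) * |y| ^ p
        - |x| * |y| ^ (p - 1) * Real.sign (x * y) := by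
  have hp0 : 0 < p := by linarith
  set a := |x|
  set b := |y|
  have ha : 0 ≤ a := abs_nonneg x
  have hb : 0 ≤ b := abs_nonneg y
  have hcross : 0 ≤ a * b ^ (p - 1) := by positivity
  have hlhs : ∀ t, 1 / (p * (2 : ℝ) ^ p) * t = t / 2 ^ p / p := fun t => by ring
  have hrhs : 1 / p * a ^ p + (p - 1) / p * b ^ p - a * b ^ (p - 1) * sign (x * y) =
      rpowBregman p a b + a * b ^ (p - 1) * (1 - sign (x * y)) := by
    rw [rpowBregman_eq hp0.ne' hb]; ring
  rw [hlhs, hrhs]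
  rcases lt_or_ge (x * y) 0 with hxy | hxy
  · rw [abs_sub_eq_abs_add_abs_of_mul_nonpos hxy.le, sign_of_neg hxy, rpowBregman_eq hp0.ne' hb]
    linarith [add_rpow_div_two_rpow_div_le hp ha hb]
  · have hsign : 0 ≤ a * b ^ (p - 1) * (1 - sign (x * y)) :=
      mul_nonneg hcross (sub_nonneg.2 (sign_le_one _))
    rw [abs_sub_eq_abs_abs_sub_abs_of_mul_nonneg hxy]
    calc |a - b| ^ p / 2 ^ p / p ≤ |a - b| ^ p / 2 ^ p := div_le_self (by positivity) (by linarith)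
      _ ≤ rpowBregman p a b := abs_sub_rpow_div_two_rpow_le_rpowBregman hp ha hb
      _ ≤ _ := le_add_of_nonneg_right hsign

/-- Scalar Bregman-divergence inequality for `p ≥ 2` and `x, y ∈ [-1, 1]`:
`(1/p)|x|^p + ((p-1)/p)|y|^p − |x||y|^{p-1} sign(xy) ≥ (1/(p·2^p)) |x − y|^p`. -/
theorem scalar_bregman_lower_bound_ge_two (p x y : ℝ) (hp : 2 ≤ p)
    (hx : x ∈ Set.Icc (-1 : ℝ) 1) (hy : y ∈ Set.Icc (-1 : ℝ) 1) :
    (1 / (p * (2 : ℝ) ^ p)) * |x - y| ^ p ≤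
      (1 / p) * |x| ^ p + ((p - 1) / p) * |y| ^ p
        - |x| * |y| ^ (p - 1) * Real.sign (x * y) :=
  scalar_bregman_lower_bound_ge_two_general p x y hp
end

section
/- Let 1 < p < 2 and let x, y ∈ [-1,1]. Then (1/p)|x|^p + ((p-1)/p)|y|^p − |x||y|^{p-1} sign(xy) ≥ ((p-1)²/p) (x − y)². -/
/-!
The left-hand side minus the right-hand side is the Bregman divergence
`ψ x - ψ y - ψ' y (x - y)` of `ψ t = |t|^p / p`, whose derivative is `sign t * |t|^(p-1)`.
On `[-1, 1]` the potential `ψ` is `(p-1)`-strongly convex: the derivative of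
`ψ t - (p-1)/2 * t^2` is odd and, on `[0, 1]`, equals `t^q - q t` with `q = p - 1 ≤ 1`,
which is increasing there. So the divergence is at least `(p-1)/2 * (x-y)^2`, and
`(p-1)^2/p ≤ (p-1)/2` because `p ≤ 2`.
-/

open Real Set

namespace Real

theorem sign_mul_abs (r : ℝ) : sign r * |r| = r := by
  obtain hn | rfl | hp := lt_trichotomy r 0
  · rw [sign_of_neg hn, abs_of_neg hn, neg_one_mul, neg_neg]
  · rw [abs_zero, mul_zero]
  · rw [sign_of_pos hp, abs_of_pos hp, one_mul]

theorem sign_mul_self (r : ℝ) : sign r * r = |r| := by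
  obtain hn | rfl | hp := lt_trichotomy r 0
  · rw [sign_of_neg hn, abs_of_neg hn, neg_one_mul]
  · rw [abs_zero, mul_zero]
  · rw [sign_of_pos hp, abs_of_pos hp, one_mul]

theorem sign_mul (x y : ℝ) : sign (x * y) = sign x * sign y := by
  obtain hx | rfl | hx := lt_trichotomy x 0 <;> obtain hy | rfl | hy := lt_trichotomy y 0 <;>
    simp [sign_of_neg, sign_of_pos, mul_pos_of_neg_of_neg, mul_neg_of_neg_of_pos,
      mul_neg_of_pos_of_neg, *]

end Real

theorem sign_mul_abs_rpow_sub_one_mul_self {p : ℝ} (hp : p ≠ 0) (y : ℝ) :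
    sign y * |y| ^ (p - 1) * y = |y| ^ p := by
  rw [mul_right_comm, Real.sign_mul_self, ← rpow_one_add' (abs_nonneg y) (by simpa),
    add_sub_cancel]

theorem hasDerivAt_abs_rpow_div_sub_sq {p : ℝ} (hp : 1 < p) (t : ℝ) :
    HasDerivAt (fun t ↦ |t| ^ p / p - (p - 1) / 2 * t ^ 2)
      (sign t * |t| ^ (p - 1) - (p - 1) * t) t := by
  have hψ : HasDerivAt (fun t ↦ |t| ^ p / p) (sign t * |t| ^ (p - 1)) t := by
    refine ((hasDerivAt_abs_rpow t hp).div_const p).congr_deriv ?_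
    have h := rpow_add_one' (abs_nonneg t) (show p - 2 + 1 ≠ 0 by linarith)
    rw [show p - 2 + 1 = p - 1 by ring] at h
    rw [h]
    field_simp
    linear_combination |t| ^ (p - 2) * (Real.sign_mul_abs t).symm
  refine (hψ.sub (((hasDerivAt_id t).pow 2).const_mul ((p - 1) / 2))).congr_deriv ?_
  simp only [id, Nat.cast_ofNat]
  ring

theorem monotoneOn_rpow_sub_mul {q : ℝ} (hq0 : 0 < q) (hq1 : q ≤ 1) :
    MonotoneOn (fun t ↦ t ^ q - q * t) (Icc 0 1) := by
  refine monotoneOn_of_hasDerivWithinAt_nonneg (f' := fun t ↦ q * t ^ (q - 1) - q)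
    (convex_Icc 0 1) ?_ (fun t ht ↦ ?_) (fun t ht ↦ ?_)
  · exact (continuousOn_id.rpow_const fun _ _ ↦ Or.inr hq0.le).sub
      (continuousOn_const.mul continuousOn_id)
  · rw [interior_Icc] at ht
    refine ((hasDerivAt_rpow_const (Or.inl ht.1.ne')).sub
      ((hasDerivAt_id t).const_mul q)).hasDerivWithinAt.congr_deriv ?_
    simp
  · rw [interior_Icc] at ht
    have : 1 ≤ t ^ (q - 1) := one_le_rpow_of_pos_of_le_one_of_nonpos ht.1 ht.2.le (by linarith)
    simp only [sub_nonneg]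
    nlinarith

theorem monotoneOn_sign_mul_abs_rpow_sub_mul {q : ℝ} (hq0 : 0 < q) (hq1 : q ≤ 1) :
    MonotoneOn (fun t ↦ sign t * |t| ^ q - q * t) (Icc (-1) 1) := by
  set k := fun t : ℝ ↦ sign t * |t| ^ q - q * t
  have hk_odd : ∀ t, k (-t) = -k t := fun t ↦ by simp only [k, sign_neg, abs_neg]; ring
  have hk_nonneg : MonotoneOn k (Icc 0 1) := by
    refine (monotoneOn_rpow_sub_mul hq0 hq1).congr fun t ht ↦ ?_
    obtain rfl | ht0 := ht.1.eq_or_lt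
    · simp [k, zero_rpow hq0.ne']
    · simp [k, sign_of_pos ht0, abs_of_pos ht0]
  have hk_nonpos : MonotoneOn k (Icc (-1) 0) := fun u hu v hv huv ↦ by
    have := hk_nonneg ⟨neg_nonneg.2 hv.2, neg_le.1 hv.1⟩ ⟨neg_nonneg.2 hu.2, neg_le.1 hu.1⟩
      (neg_le_neg huv)
    rw [hk_odd, hk_odd] at this
    linarith
  rw [← Icc_union_Icc_eq_Icc (by norm_num : (-1 : ℝ) ≤ 0) zero_le_one]
  exact hk_nonpos.union_right hk_nonneg (isGreatest_Icc (by norm_num)) (isLeast_Icc zero_le_one)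

theorem convexOn_abs_rpow_div_sub_sq {p : ℝ} (hp1 : 1 < p) (hp2 : p ≤ 2) :
    ConvexOn ℝ (Icc (-1) 1) (fun t ↦ |t| ^ p / p - (p - 1) / 2 * t ^ 2) := by
  have hderiv := hasDerivAt_abs_rpow_div_sub_sq hp1
  have hdiff : Differentiable ℝ (fun t ↦ |t| ^ p / p - (p - 1) / 2 * t ^ 2) :=
    fun t ↦ (hderiv t).differentiableAt
  refine MonotoneOn.convexOn_of_deriv (convex_Icc _ _) hdiff.continuous.continuousOn
    hdiff.differentiableOn ?_
  rw [funext fun t ↦ (hderiv t).deriv]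
  exact (monotoneOn_sign_mul_abs_rpow_sub_mul (by linarith) (by linarith)).mono interior_subset

theorem ConvexOn.add_mul_sub_le_of_hasDerivAt {S : Set ℝ} {f : ℝ → ℝ} {f' x y : ℝ}
    (hf : ConvexOn ℝ S f) (hx : x ∈ S) (hy : y ∈ S) (hf' : HasDerivAt f f' y) :
    f y + f' * (x - y) ≤ f x := by
  obtain hxy | rfl | hxy := lt_trichotomy x y
  · have := hf.slope_le_of_hasDerivAt hx hy hxy hf'
    rw [slope_def_field, div_le_iff₀ (sub_pos.2 hxy)] at this
    linarith
  · simp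
  · have := hf.le_slope_of_hasDerivAt hy hx hxy hf'
    rw [slope_def_field, le_div_iff₀ (sub_pos.2 hxy)] at this
    linarith

/-- Scalar Bregman-divergence inequality for `1 < p < 2` and `x, y ∈ [-1, 1]`:
`(1/p)|x|^p + ((p-1)/p)|y|^p − |x||y|^{p-1} sign(xy) ≥ ((p-1)²/p) (x − y)²`. -/
theorem scalar_bregman_lower_bound_lt_two (p x y : ℝ) (hp1 : 1 < p) (hp2 : p < 2)
    (hx : x ∈ Set.Icc (-1 : ℝ) 1) (hy : y ∈ Set.Icc (-1 : ℝ) 1) :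
    ((p - 1) ^ 2 / p) * (x - y) ^ 2 ≤
      (1 / p) * |x| ^ p + ((p - 1) / p) * |y| ^ p
        - |x| * |y| ^ (p - 1) * Real.sign (x * y) := by
  have hp0 : 0 < p := by linarith
  have htangent := (convexOn_abs_rpow_div_sub_sq hp1 hp2.le).add_mul_sub_le_of_hasDerivAt hx hy
    (hasDerivAt_abs_rpow_div_sub_sq hp1 y)
  have hself := sign_mul_abs_rpow_sub_one_mul_self hp0.ne' y
  have hcross : |x| * |y| ^ (p - 1) * sign (x * y) = sign y * |y| ^ (p - 1) * x := by
    rw [Real.sign_mul]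
    linear_combination sign y * |y| ^ (p - 1) * Real.sign_mul_abs x
  have hcoef : (p - 1) ^ 2 / p ≤ (p - 1) / 2 := by
    rw [div_le_div_iff₀ hp0 two_pos]
    nlinarith
  calc (p - 1) ^ 2 / p * (x - y) ^ 2 ≤ (p - 1) / 2 * (x - y) ^ 2 := by gcongr
    _ ≤ _ := by
      rw [hcross, show (p - 1) / p = 1 - 1 / p by field_simp]
      linear_combination htangent + hself
end

section
/- Let p ≥ 2 and let W₁, W₂ ∈ R^{d×d} with ‖W₁‖_{p,p} = ‖W₂‖_{p,p} = 1. Let ψ(W) = (1/p)‖W‖_{p,p}^p and let D_ψ(W,V) = ψ(W) − ψ(V) − ⟨∇ψ(V), W − V⟩ be the Bregman divergence. Then D_ψ(W₁, W₂) ≥ (1/(p·2^p)) ‖W₁ − W₂‖_{p,p}^p. -/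
open Real Finset

/-- Entrywise `ℓ_{p,p}` norm of a `d × d` real matrix. -/
noncomputable def mpnorm {d : ℕ} (p : ℝ) (W : Fin d → Fin d → ℝ) : ℝ :=
  (∑ i, ∑ j, |W i j| ^ p) ^ (1 / p)

/-- Trace inner product `⟨A, B⟩ = trace(Aᵀ B) = ∑_{i,j} A_{ij} B_{ij}`. -/
def mInner {d : ℕ} (A B : Fin d → Fin d → ℝ) : ℝ := ∑ i, ∑ j, A i j * B i j

/-- The potential `ψ(W) = (1/p) ‖W‖_{p,p}^p`. -/
noncomputable def psiP {d : ℕ} (p : ℝ) (W : Fin d → Fin d → ℝ) : ℝ :=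
  (1 / p) * mpnorm p W ^ p

/-- The gradient of `ψ`, with entries `sign(V_{ij}) |V_{ij}|^{p-1}`. -/
noncomputable def gradPsi {d : ℕ} (p : ℝ) (V : Fin d → Fin d → ℝ) : Fin d → Fin d → ℝ :=
  fun i j => Real.sign (V i j) * |V i j| ^ (p - 1)

/-- The Bregman divergence `D_ψ(W, V) = ψ(W) − ψ(V) − ⟨∇ψ(V), W − V⟩`. -/
noncomputable def DpsiP {d : ℕ} (p : ℝ) (W V : Fin d → Fin d → ℝ) : ℝ :=
  psiP p W - psiP p V - mInner (gradPsi p V) (W - V)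

/- Auxiliary lemmas -/

lemma aux_bernoulli {p : ℝ} (hp : 1 ≤ p) (t : ℝ) : 1 + p * (t - 1) ≤ |t| ^ p := by
  rcases le_or_gt 0 t with ht | ht
  · have h := one_add_mul_self_le_rpow_one_add (by linarith : (-1:ℝ) ≤ t - 1) hp
    have e : (1 + (t - 1)) = t := by ring
    rw [e] at h
    rwa [abs_of_nonneg ht]
  · have h0 : (0:ℝ) ≤ |t| ^ p := Real.rpow_nonneg (abs_nonneg t) p
    nlinarith

lemma aux_tangent_pos {p : ℝ} (hp : 1 ≤ p) {b : ℝ} (hb : 0 < b) (y : ℝ) :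
    p * (b ^ (p - 1) * (y - b)) ≤ |y| ^ p - b ^ p := by
  set t := y / b with ht
  have hbp : (0:ℝ) < b ^ p := Real.rpow_pos_of_pos hb p
  have key := aux_bernoulli hp t
  have habs : |t| ^ p * b ^ p = |y| ^ p := by
    rw [ht, abs_div, abs_of_pos hb, Real.div_rpow (abs_nonneg y) hb.le,
      div_mul_cancel₀ _ hbp.ne']
  have hb1 : b ^ p = b ^ (p - 1) * b := by
    have h := Real.rpow_add hb (p - 1) 1
    rw [sub_add_cancel, Real.rpow_one] at h
    exact h
  have hEq : b ^ p * (t - 1) = b ^ (p - 1) * (y - b) := by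
    rw [hb1, ht]
    field_simp
  have hmul : b ^ p * (1 + p * (t - 1)) ≤ b ^ p * |t| ^ p :=
    mul_le_mul_of_nonneg_left key hbp.le
  nlinarith [hmul, hEq, habs]

lemma aux_tangent {p : ℝ} (hp : 1 ≤ p) (b y : ℝ) :
    p * (Real.sign b * |b| ^ (p - 1) * (y - b)) ≤ |y| ^ p - |b| ^ p := by
  rcases lt_trichotomy b 0 with hb | rfl | hb
  · have h := aux_tangent_pos hp (by linarith : (0:ℝ) < -b) (-y)
    rw [Real.sign_of_neg hb, abs_of_neg hb]
    rw [abs_neg] at h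
    have e : -y - -b = -(y - b) := by ring
    rw [e] at h
    linarith [h]
  · rw [Real.sign_zero, abs_zero, Real.zero_rpow (by linarith : p ≠ 0)]
    simp only [zero_mul, mul_zero, sub_zero]
    exact Real.rpow_nonneg (abs_nonneg y) p
  · have h := aux_tangent_pos hp hb y
    rw [Real.sign_of_pos hb, abs_of_pos hb]
    linarith [h]

lemma aux_mid {q : ℝ} (hq : 1 ≤ q) {x y : ℝ} (hx : 0 ≤ x) (hy : 0 ≤ y) :
    ((x + y) / 2) ^ q ≤ (x ^ q + y ^ q) / 2 := by
  have h := (convexOn_rpow hq).2 (Set.mem_Ici.2 hx) (Set.mem_Ici.2 hy)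
    (by norm_num : (0:ℝ) ≤ 1/2) (by norm_num : (0:ℝ) ≤ 1/2) (by norm_num)
  simp only [smul_eq_mul] at h
  have e : (1:ℝ)/2 * x + 1/2 * y = (x + y) / 2 := by ring
  rw [e] at h
  linarith

lemma aux_super {q : ℝ} (hq : 1 ≤ q) {x y : ℝ} (hx : 0 ≤ x) (hy : 0 ≤ y) :
    x ^ q + y ^ q ≤ (x + y) ^ q := by
  lift x to NNReal using hx
  lift y to NNReal using hy
  exact_mod_cast NNReal.add_rpow_le_rpow_add x y hq

lemma aux_sq_rpow {p : ℝ} (x : ℝ) : (x ^ 2) ^ (p / 2) = |x| ^ p := by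
  rw [← sq_abs, ← Real.rpow_natCast |x| 2, ← Real.rpow_mul (abs_nonneg x)]
  norm_num
  rw [mul_div_cancel₀ _ (by norm_num : (2:ℝ) ≠ 0)]

lemma aux_clarkson {p : ℝ} (hp : 2 ≤ p) (u v : ℝ) :
    2 * (|u| ^ p + |v| ^ p) ≤ |u + v| ^ p + |u - v| ^ p := by
  have hq : 1 ≤ p / 2 := by linarith
  have h1 := aux_mid hq (sq_nonneg (u + v)) (sq_nonneg (u - v))
  have h2 : ((u + v) ^ 2 + (u - v) ^ 2) / 2 = u ^ 2 + v ^ 2 := by ring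
  have h3 : (u ^ 2) ^ (p/2) + (v ^ 2) ^ (p/2) ≤ (u ^ 2 + v ^ 2) ^ (p/2) :=
    aux_super hq (sq_nonneg u) (sq_nonneg v)
  rw [h2] at h1
  rw [← aux_sq_rpow u, ← aux_sq_rpow v, ← aux_sq_rpow (u + v), ← aux_sq_rpow (u - v)]
  linarith

/-- Pointwise Bregman bound. -/
lemma aux_pointwise {p : ℝ} (hp : 2 ≤ p) (a b : ℝ) :
    (1 / (p * (2:ℝ) ^ p)) * |a - b| ^ p ≤
      (1/p) * |a| ^ p - (1/p) * |b| ^ p - Real.sign b * |b| ^ (p - 1) * (a - b) := by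
  have hp1 : (1:ℝ) ≤ p := by linarith
  have hp0 : (0:ℝ) < p := by linarith
  have h2p : (0:ℝ) < (2:ℝ) ^ p := Real.rpow_pos_of_pos two_pos p
  set m := (a + b) / 2 with hm
  have htan := aux_tangent hp1 b m
  have hmb : m - b = (a - b) / 2 := by rw [hm]; ring
  have hclark := aux_clarkson hp m ((a - b) / 2)
  have he1 : m + (a - b) / 2 = a := by rw [hm]; ring
  have he2 : m - (a - b) / 2 = b := by rw [hm]; ring
  rw [he1, he2] at hclark
  have hhalf : |(a - b) / 2| ^ p = |a - b| ^ p / (2:ℝ) ^ p := by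
    rw [abs_div, abs_two, Real.div_rpow (abs_nonneg _) (by norm_num)]
  rw [hhalf] at hclark
  rw [hmb] at htan
  have hC : (0:ℝ) ≤ |a - b| ^ p := Real.rpow_nonneg (abs_nonneg _) p
  -- key : |a-b|^p / 2^p ≤ |a|^p - |b|^p - p * (sign b * |b|^(p-1) * (a-b))
  have key : |a - b| ^ p / (2:ℝ) ^ p ≤
      |a| ^ p - |b| ^ p - p * (Real.sign b * |b| ^ (p - 1) * (a - b)) := by
    have hCd : (0:ℝ) ≤ |a - b| ^ p / (2:ℝ) ^ p := by positivity
    nlinarith [htan, hclark]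
  have := mul_le_mul_of_nonneg_left key (by positivity : (0:ℝ) ≤ 1/p)
  calc (1 / (p * (2:ℝ) ^ p)) * |a - b| ^ p
      = (1/p) * (|a - b| ^ p / (2:ℝ) ^ p) := by field_simp
    _ ≤ (1/p) * (|a| ^ p - |b| ^ p - p * (Real.sign b * |b| ^ (p - 1) * (a - b))) := this
    _ = (1/p) * |a| ^ p - (1/p) * |b| ^ p - Real.sign b * |b| ^ (p - 1) * (a - b) := by
        field_simp

/-- For `p ≥ 2` and unit `ℓ_{p,p}`-norm matrices, the Bregman divergence of
`ψ = (1/p)‖·‖_{p,p}^p` is at least `(1/(p·2^p)) ‖W₁ − W₂‖_{p,p}^p`. -/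
theorem bregman_lower_bound_ge_two {d : ℕ} (p : ℝ) (hp : 2 ≤ p)
    (W₁ W₂ : Fin d → Fin d → ℝ) (h1 : mpnorm p W₁ = 1) (h2 : mpnorm p W₂ = 1) :
    (1 / (p * (2 : ℝ) ^ p)) * mpnorm p (W₁ - W₂) ^ p ≤ DpsiP p W₁ W₂ := by
  have hp0 : (0:ℝ) < p := by linarith
  have hnorm : ∀ X : Fin d → Fin d → ℝ, mpnorm p X ^ p = ∑ i, ∑ j, |X i j| ^ p := by
    intro X
    unfold mpnorm
    rw [← Real.rpow_mul (by positivity), one_div, inv_mul_cancel₀ hp0.ne', Real.rpow_one]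
  simp only [DpsiP, psiP, mInner, gradPsi, hnorm, Pi.sub_apply]
  simp only [Finset.mul_sum, ← Finset.sum_sub_distrib]
  apply Finset.sum_le_sum
  intro i _
  apply Finset.sum_le_sum
  intro j _
  exact aux_pointwise hp (W₁ i j) (W₂ i j)
end

section
/- Consider one mirror descent step with potential ψ(W) = (1/p)‖W‖_{p,p}^p, i.e., ∇ψ(W(k+1)) = ∇ψ(W(k)) − η ∇L(W(k)) for some differentiable L and η > 0. Then ‖W(k+1)‖_{p,p}^{p-1} ≥ ‖W(k)‖_{p,p}^{p-1} + (η/‖W(k)‖_{p,p}) ⟨−∇L(W(k)), W(k)⟩, provided W(k) ≠ 0. -/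
open Real Finset

/-- One mirror descent step with potential `ψ(W) = (1/p)‖W‖_{p,p}^p`:
if `∇ψ(W(k+1)) = ∇ψ(W(k)) − η ∇L(W(k))` with `W(k) ≠ 0`, then
`‖W(k+1)‖_{p,p}^{p-1} ≥ ‖W(k)‖_{p,p}^{p-1} + (η/‖W(k)‖_{p,p}) ⟨−∇L(W(k)), W(k)⟩`. -/
theorem md_norm_growth {d : ℕ} (p η : ℝ) (hp : 1 < p) (hη : 0 < η)
    (L : (Fin d → Fin d → ℝ) → ℝ) (hL : Differentiable ℝ L)
    (G Wk Wk1 : Fin d → Fin d → ℝ)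
    (hG : ∀ A, fderiv ℝ L Wk A = mInner G A)
    (hupd : gradPsi p Wk1 = gradPsi p Wk - η • G)
    (hW : Wk ≠ 0) :
    mpnorm p Wk ^ (p - 1) + (η / mpnorm p Wk) * mInner (-G) Wk ≤
      mpnorm p Wk1 ^ (p - 1) := by
  have hp0 : (0:ℝ) < p := lt_trans one_pos hp
  have hp1 : (0:ℝ) < p - 1 := sub_pos.2 hp
  set S : ℝ := ∑ i, ∑ j, |Wk i j| ^ p with hS
  set T : ℝ := ∑ i, ∑ j, |Wk1 i j| ^ p with hT
  have hS0 : 0 ≤ S := Finset.sum_nonneg fun i _ => Finset.sum_nonneg fun j _ =>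
    Real.rpow_nonneg (abs_nonneg _) _
  have hT0 : 0 ≤ T := Finset.sum_nonneg fun i _ => Finset.sum_nonneg fun j _ =>
    Real.rpow_nonneg (abs_nonneg _) _
  have hSpos : 0 < S := by
    obtain ⟨i, hi⟩ : ∃ i, Wk i ≠ 0 := by
      by_contra h; push_neg at h; exact hW (funext h)
    obtain ⟨j, hj⟩ : ∃ j, Wk i j ≠ 0 := by
      by_contra h; push_neg at h; exact hi (funext h)
    refine Finset.sum_pos' (fun i _ => Finset.sum_nonneg fun j _ =>
      Real.rpow_nonneg (abs_nonneg _) _) ⟨i, Finset.mem_univ i, ?_⟩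
    refine Finset.sum_pos' (fun j _ => Real.rpow_nonneg (abs_nonneg _) _)
      ⟨j, Finset.mem_univ j, Real.rpow_pos_of_pos (abs_pos.2 hj) p⟩
  set N : ℝ := S ^ (1/p) with hN
  have hNpos : 0 < N := Real.rpow_pos_of_pos hSpos _
  have hmWk : mpnorm p Wk = N := rfl
  -- ⟨∇ψ(Wk), Wk⟩ = S
  have hinnerS : mInner (gradPsi p Wk) Wk = S := by
    rw [hS]
    unfold mInner gradPsi
    refine Finset.sum_congr rfl fun i _ => Finset.sum_congr rfl fun j _ => ?_
    set x := Wk i j with hx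
    rcases lt_trichotomy x 0 with hlt | heq | hgt
    · rw [Real.sign_of_neg hlt, abs_of_neg hlt,
        show p = (p-1)+1 by ring, Real.rpow_add_one (neg_pos.2 hlt).ne']
      ring
    · simp [heq, Real.zero_rpow hp0.ne']
    · rw [Real.sign_of_pos hgt, abs_of_pos hgt,
        show p = (p-1)+1 by ring, Real.rpow_add_one hgt.ne']
      ring
  -- linearity of the inner product in the first slot
  have hlin : mInner (gradPsi p Wk - η • G) Wk
      = mInner (gradPsi p Wk) Wk + η * mInner (-G) Wk := by
    unfold mInner
    simp only [Pi.sub_apply, Pi.smul_apply, Pi.neg_apply, smul_eq_mul, sub_mul, neg_mul,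
      Finset.sum_sub_distrib, Finset.mul_sum, Finset.sum_neg_distrib, mul_assoc]
    simp [Finset.mul_sum, sub_eq_add_neg]
  -- pointwise identity for |∇ψ(Wk1)|^(q)
  have hB : ∀ x : ℝ, |Real.sign x * |x| ^ (p-1)| ^ (p/(p-1)) = |x| ^ p := by
    intro x
    rcases eq_or_ne x 0 with hx | hx
    · subst hx
      simp [Real.zero_rpow hp1.ne', Real.zero_rpow hp0.ne',
        Real.zero_rpow (div_pos hp0 hp1).ne']
    · have h1 : |Real.sign x| = 1 := by
        rcases lt_or_gt_of_ne hx with h | h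
        · rw [Real.sign_of_neg h]; norm_num
        · rw [Real.sign_of_pos h]; norm_num
      rw [abs_mul, abs_of_nonneg (Real.rpow_nonneg (abs_nonneg x) _), h1, one_mul,
        ← Real.rpow_mul (abs_nonneg x)]
      congr 1
      field_simp
  have hq : Real.HolderConjugate (p/(p-1)) p :=
    ((Real.holderConjugate_iff_eq_conjExponent hp).2 rfl).symm
  -- Hölder's inequality
  have holder : mInner (gradPsi p Wk1) Wk ≤ T ^ ((p-1)/p) * N := by
    have h := Real.inner_le_Lp_mul_Lq (Finset.univ : Finset (Fin d × Fin d))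
      (fun ij => gradPsi p Wk1 ij.1 ij.2) (fun ij => Wk ij.1 ij.2) hq
    have e1 : ∑ ij : Fin d × Fin d, gradPsi p Wk1 ij.1 ij.2 * Wk ij.1 ij.2
        = mInner (gradPsi p Wk1) Wk := by
      unfold mInner; rw [Fintype.sum_prod_type]
    have e2 : ∑ ij : Fin d × Fin d, |gradPsi p Wk1 ij.1 ij.2| ^ (p/(p-1)) = T := by
      rw [hT, Fintype.sum_prod_type]
      exact Finset.sum_congr rfl fun i _ => Finset.sum_congr rfl fun j _ => hB _
    have e3 : ∑ ij : Fin d × Fin d, |Wk ij.1 ij.2| ^ p = S := by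
      rw [hS, Fintype.sum_prod_type]
    have e4 : (1 : ℝ) / (p/(p-1)) = (p-1)/p := one_div_div _ _
    rw [e1, e2, e3, e4] at h
    exact h
  -- rewrite the update to get the key inequality
  have hkey : S + η * mInner (-G) Wk ≤ T ^ ((p-1)/p) * N := by
    rw [← hinnerS, ← hlin, ← hupd]
    exact holder
  -- S / N = S ^ ((p-1)/p)
  have hSdiv : S / N = S ^ ((p-1)/p) := by
    rw [hN]
    nth_rewrite 1 [← Real.rpow_one S]
    rw [← Real.rpow_sub hSpos]
    congr 1
    field_simp
  -- rewrite the goal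
  have hWk1 : mpnorm p Wk1 ^ (p-1) = T ^ ((p-1)/p) := by
    show ((T) ^ (1/p)) ^ (p-1) = T ^ ((p-1)/p)
    rw [← Real.rpow_mul hT0]
    congr 1
    field_simp
  have hWkpow : mpnorm p Wk ^ (p-1) = S ^ ((p-1)/p) := by
    rw [hmWk, hN, ← Real.rpow_mul hS0]
    congr 1
    field_simp
  rw [hWk1, hWkpow, hmWk]
  rw [← hSdiv]
  have : S / N + η / N * mInner (-G) Wk = (S + η * mInner (-G) Wk) / N := by
    field_simp
  rw [this, div_le_iff₀ hNpos]
  exact hkey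
end
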